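/- The boundary fusion relation holds: K^W₁(z,r) L(z²,r) K^V₂(z) ι(r) = (1 − z⁴)(ξ − q²z²) ι(r) K^W(qz, qr) as maps W → W ⊗ V. -/

import Mathlib

noncomputable section

open Finsupp Matrix

/-- The infinite-dimensional space `W = ⊕_{j≥0} ℂ w^j`. -/
abbrev Wsp : Type := ℕ →₀ ℂ

abbrev EndW : Type := Module.End ℂ Wsp

/-- The basis vector `w^j`. -/
def wv (j : ℕ) : Wsp := Finsupp.single j 1

/-- The linear operator on `W` determined by its values on the basis. -/
def mkOp (g : ℕ → Wsp) : EndW :=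
  Finsupp.lsum ℂ fun j => LinearMap.toSpanSingleton ℂ Wsp (g j)

/-- The annihilation operator `a`. -/
def opA : EndW := mkOp fun j => match j with | 0 => 0 | i + 1 => wv i

/-- The creation operator `a†`. -/
def opAdag (q : ℂ) : EndW := mkOp fun j => (1 - q ^ (2 * (j + 1))) • wv (j + 1)

/-- The diagonal operator `f(D)`. -/
def opDiag (f : ℕ → ℂ) : EndW := mkOp fun j => f j • wv j

/-- The L-operator `L(z,r)` on `W ⊗ ℂ²`, written as a 2×2 matrix with entries in `End(W)`. -/
def Lmat (q z r : ℂ) : Matrix (Fin 2) (Fin 2) EndW :=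
  !![1, -(q⁻¹ * z) • opAdag q;
     -(q * z) • opA, opDiag fun j => 1 - q ^ (2 * (j + 1)) * z ^ 2] *
  !![r • opDiag (fun j => q ^ j), 0;
     0, opDiag fun j => (q ^ j)⁻¹]

/-- The infinite-dimensional K-matrix `K^W(z,r)`, acting diagonally on `W` by
`w^j ↦ (q r⁻¹)^j ∏_{i=1}^j (z² - q^{-2i} ξ) w^j`. -/
def KWop (q r ξ z : ℂ) : EndW :=
  opDiag fun j => (q * r⁻¹) ^ j * ∏ i ∈ Finset.range j, (z ^ 2 - (q⁻¹) ^ (2 * (i + 1)) * ξ)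

/-- An operator `X` on `W`, acting in the first factor of `W ⊗ ℂ²`. -/
def d2 (X : EndW) : Matrix (Fin 2) (Fin 2) EndW := !![X, 0; 0, X]

/-- The diagonal K-matrix `K^V(z) = diag(ξz²-1, ξ-z²)`, acting in the second factor of
`W ⊗ ℂ²`. -/
def KVd2 (ξ z : ℂ) : Matrix (Fin 2) (Fin 2) EndW :=
  !![(ξ * z ^ 2 - 1) • 1, 0; 0, (ξ - z ^ 2) • 1]

/-- The components of the fusion intertwiner `ι(r) : W → W ⊗ V`,
`ι(r)(w^j) = (q^{-j-1} - q^{j+1}) w^{j+1} ⊗ v⁰ + q^{j+1} r w^j ⊗ v¹`. -/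
def iotaC (q r : ℂ) : Fin 2 → EndW :=
  ![mkOp fun j => ((q⁻¹) ^ (j + 1) - q ^ (j + 1)) • wv (j + 1),
    opDiag fun j => q ^ (j + 1) * r]

/-- The components of the fusion intertwiner `τ(r) : W ⊗ V → W`,
`τ(r)(w^j ⊗ v⁰) = q^j w^j`, `τ(r)(w^j ⊗ v¹) = (q^{j+1} - q^{-j-1}) r⁻¹ w^{j+1}`. -/
def tauC (q r : ℂ) : Fin 2 → EndW :=
  ![opDiag fun j => q ^ j,
    mkOp fun j => ((q ^ (j + 1) - (q⁻¹) ^ (j + 1)) * r⁻¹) • wv (j + 1)]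

/-!
On `w^j`, the twisted L-operator `L(z², r) K^V₂(z)` sends `ι(r) w^j` to
`r (1 - q^{2j+2}) (z⁴ - 1) w^{j+1} ⊗ v⁰ + q r (1 - z⁴) (ξ - q^{2j+2} z²) w^j ⊗ v¹`, which already
carries the factor `1 - z⁴`. The remaining factor `ξ - q² z²` comes from comparing the eigenvalues
of `K^W`: replacing `z` by `q z` shifts the product `∏ (z² - q^{-2i} ξ)` by one index, so that
`(q² z² - ξ) κ_j(qz, qr) = q^{j+1} r κ_{j+1}(z, r)` for the eigenvalues `κ` of `K^W`.
-/

lemma mkOp_wv (g : ℕ → Wsp) (j : ℕ) : mkOp g (wv j) = g j := by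
  simp [mkOp, wv]

lemma endW_ext {f g : EndW} (h : ∀ j, f (wv j) = g (wv j)) : f = g := by
  refine Finsupp.lhom_ext fun a b => ?_
  have hs : (Finsupp.single a b : Wsp) = b • wv a := by simp [wv, Finsupp.smul_single]
  rw [hs, _root_.map_smul, _root_.map_smul, h]

lemma opDiag_wv (f : ℕ → ℂ) (j : ℕ) : opDiag f (wv j) = f j • wv j := mkOp_wv _ j

lemma opA_wv_succ (j : ℕ) : opA (wv (j + 1)) = wv j := mkOp_wv _ (j + 1)

lemma opAdag_wv (q : ℂ) (j : ℕ) : opAdag q (wv j) = (1 - q ^ (2 * (j + 1))) • wv (j + 1) :=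
  mkOp_wv _ j

lemma d2_mul_mulVec (X : EndW) (N : Matrix (Fin 2) (Fin 2) EndW) (v : Fin 2 → EndW)
    (i : Fin 2) : ((d2 X * N) *ᵥ v) i = X * (N *ᵥ v) i := by
  rw [← mulVec_mulVec, d2, ← diagonal_fin_two (fun _ => X), mulVec_diagonal]

section coefficients

variable (q r ξ z : ℂ)

def kwCoeff (j : ℕ) : ℂ :=
  (q * r⁻¹) ^ j * ∏ i ∈ Finset.range j, (z ^ 2 - (q⁻¹) ^ (2 * (i + 1)) * ξ)

lemma KWop_wv (j : ℕ) : KWop q r ξ z (wv j) = kwCoeff q r ξ z j • wv j := opDiag_wv _ j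

lemma kwCoeff_succ (j : ℕ) :
    kwCoeff q r ξ z (j + 1) =
      kwCoeff q r ξ z j * (q * r⁻¹) * (z ^ 2 - q⁻¹ ^ (2 * (j + 1)) * ξ) := by
  simp only [kwCoeff, pow_succ, Finset.prod_range_succ]
  ring

lemma kwCoeff_shift {q r} (hq : q ≠ 0) (hr : r ≠ 0) (j : ℕ) :
    (q ^ 2 * z ^ 2 - ξ) * kwCoeff q (q * r) ξ (q * z) j =
      q ^ (j + 1) * r * kwCoeff q r ξ z (j + 1) := by
  have hfactor (i : ℕ) :
      (q * z) ^ 2 - q⁻¹ ^ (2 * (i + 1)) * ξ = q ^ 2 * (z ^ 2 - q⁻¹ ^ (2 * (i + 1 + 1)) * ξ) := by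
    simp only [inv_pow]
    field_simp
    ring
  have hprod : ∏ i ∈ Finset.range j, ((q * z) ^ 2 - q⁻¹ ^ (2 * (i + 1)) * ξ)
      = (q ^ 2) ^ j * ∏ i ∈ Finset.range j, (z ^ 2 - q⁻¹ ^ (2 * (i + 1 + 1)) * ξ) := by
    rw [Finset.prod_congr rfl fun i _ => hfactor i, Finset.prod_mul_distrib, Finset.prod_const,
      Finset.card_range]
  rw [kwCoeff, kwCoeff, hprod, Finset.prod_range_succ']
  generalize ∏ i ∈ Finset.range j, (z ^ 2 - q⁻¹ ^ (2 * (i + 1 + 1)) * ξ) = Q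
  rw [show q * (q * r)⁻¹ = r⁻¹ by field_simp]
  simp only [mul_pow, inv_pow, zero_add, mul_one]
  field_simp
  ring

end coefficients

lemma Lmat_KVd2_iotaC_zero_wv (q r ξ z : ℂ) (hq : q ≠ 0) (j : ℕ) :
    ((Lmat q (z ^ 2) r * KVd2 ξ z) *ᵥ iotaC q r) 0 (wv j) =
      (r * (1 - q ^ (2 * (j + 1))) * (z ^ 4 - 1)) • wv (j + 1) := by
  rw [Lmat, KVd2, mul_fin_two, mul_fin_two, mulVec_fin_two]
  simp only [of_apply, cons_val', cons_val_zero, cons_val_one, cons_val_fin_one, iotaC, one_mul,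
    mul_one, mul_zero, add_zero, zero_add, mul_neg, neg_mul, inv_pow, Algebra.mul_smul_comm,
    Algebra.smul_mul_assoc, LinearMap.add_apply, LinearMap.smul_apply,
    Module.End.mul_apply, map_smul, smul_smul, neg_smul, mkOp_wv, opDiag_wv, opAdag_wv]
  rw [← neg_smul, ← add_smul]
  congr 1
  field_simp
  ring

lemma Lmat_KVd2_iotaC_one_wv (q r ξ z : ℂ) (hq : q ≠ 0) (j : ℕ) :
    ((Lmat q (z ^ 2) r * KVd2 ξ z) *ᵥ iotaC q r) 1 (wv j) =
      (q * r * (1 - z ^ 4) * (ξ - q ^ (2 * (j + 1)) * z ^ 2)) • wv j := by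
  rw [Lmat, KVd2, mul_fin_two, mul_fin_two, mulVec_fin_two]
  simp only [of_apply, cons_val', cons_val_zero, cons_val_one, cons_val_fin_one, iotaC, one_mul,
    mul_one, mul_zero, add_zero, zero_add, mul_neg, neg_mul, inv_pow, Algebra.mul_smul_comm,
    Algebra.smul_mul_assoc, LinearMap.add_apply, LinearMap.smul_apply,
    Module.End.mul_apply, map_smul, smul_smul, neg_smul, mkOp_wv, opDiag_wv, opA_wv_succ]
  rw [← neg_smul, ← add_smul]
  congr 1
  field_simp
  ring

theorem boundary_fusion_iota_general (q r ξ z : ℂ) (hq0 : q ≠ 0) (hr : r ≠ 0) :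
    (d2 (KWop q r ξ z) * Lmat q (z ^ 2) r * KVd2 ξ z).mulVec (iotaC q r) =
      fun i => ((1 - z ^ 4) * (ξ - q ^ 2 * z ^ 2)) •
        (iotaC q r i * KWop q (q * r) ξ (q * z)) := by
  have hshift (j : ℕ) := kwCoeff_shift ξ z hq0 hr j
  refine funext (Fin.forall_fin_two.2 ⟨endW_ext fun j => ?_, endW_ext fun j => ?_⟩) <;>
    rw [Matrix.mul_assoc, d2_mul_mulVec, LinearMap.smul_apply, Module.End.mul_apply,
      Module.End.mul_apply, KWop_wv, map_smul]
  · rw [Lmat_KVd2_iotaC_zero_wv q r ξ z hq0, map_smul, KWop_wv]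
    simp only [iotaC, cons_val_zero, mkOp_wv, smul_smul]
    congr 1
    linear_combination (norm := skip) (1 - z ^ 4) * (q⁻¹ ^ (j + 1) - q ^ (j + 1)) * hshift j
    simp only [inv_pow]
    field_simp
    ring
  · rw [Lmat_KVd2_iotaC_one_wv q r ξ z hq0, map_smul, KWop_wv]
    simp only [iotaC, cons_val_one, cons_val_zero, opDiag_wv, smul_smul]
    congr 1
    linear_combination (norm := skip) (1 - z ^ 4) * q ^ (j + 1) * r *
      (hshift j + q ^ (j + 1) * r * kwCoeff_succ q r ξ z j)
    simp only [inv_pow]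
    field_simp
    ring

/-- boundary fusion relation
`K^W₁(z,r) L(z²,r) K^V₂(z) ι(r) = (1-z⁴)(ξ-q²z²) ι(r) K^W(qz,qr)` as maps `W → W ⊗ V`. -/
theorem boundary_fusion_iota (q r ξ z : ℂ) (hq0 : q ≠ 0) (hq1 : q ≠ 1) (hqm1 : q ≠ -1)
    (hr : r ≠ 0) (hξ : ξ ≠ 0) (hz : z ≠ 0) :
    (d2 (KWop q r ξ z) * Lmat q (z ^ 2) r * KVd2 ξ z).mulVec (iotaC q r) =
      fun i => ((1 - z ^ 4) * (ξ - q ^ 2 * z ^ 2)) •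
        (iotaC q r i * KWop q (q * r) ξ (q * z)) :=
  boundary_fusion_iota_general q r ξ z hq0 hr
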